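/- Let (T, M) be a local domain with residue field k, with residue map π : T → k, and let D be an integral domain with fraction field k, viewed as a subring of k. Let A := D ×_k T = π⁻¹(D). Then T, together with the inclusion A → T, is a localization of A; precisely, T = A_M, the localization of A at the prime ideal M of A. -/

import Mathlib

/-!
Every element of `T \ M` is a unit, and writing `π t = d / s` with `d, s ∈ D` and lifting `s`
to `s' ∈ T \ M` gives `t = (t s') / s'` with `t s', s' ∈ A`. Hence `T` is obtained from `A` by
inverting `A \ M`.
-/

theorem Subring.isLocalization_of_isUnit_of_exists_mul_mem {T : Type*} [CommRing T]
    (A : Subring T) (S : Submonoid A) (hS : ∀ s ∈ S, IsUnit (s : T))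
    (h : ∀ t : T, ∃ s ∈ S, t * s ∈ A) :
    @IsLocalization A _ S T _ A.subtype.toAlgebra := by
  let : Algebra A T := A.subtype.toAlgebra
  refine ⟨fun s => hS s s.2, fun t => ?_, fun {a b} hab => ⟨1, by rw [Subtype.ext hab]⟩⟩
  obtain ⟨s, hs, hts⟩ := h t
  exact ⟨(⟨t * s, hts⟩, ⟨s, hs⟩), rfl⟩

theorem exists_mul_mem_comap_of_isFractionRing {T k : Type*} [CommRing T] [Field k]
    {π : T →+* k} (hπ : Function.Surjective π) (D : Subring k) [IsFractionRing D k] (t : T) :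
    ∃ s ∈ D.comap π, π s ≠ 0 ∧ t * s ∈ D.comap π := by
  obtain ⟨⟨d, s⟩, hds⟩ := IsLocalization.surj (nonZeroDivisors D) (π t)
  obtain ⟨s', hs'⟩ := hπ s
  refine ⟨s', ?_, ?_, ?_⟩
  · rw [Subring.mem_comap, hs']
    exact s.1.2
  · rw [hs']
    exact fun h0 => nonZeroDivisors.coe_ne_zero s (Subtype.ext h0)
  · rw [Subring.mem_comap, map_mul, hs']
    exact hds ▸ d.2

theorem stmt_6 {T k : Type*} [CommRing T] [IsLocalRing T] [Field k]
    (π : T →+* k) (hπ : Function.Surjective π)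
    (hker : RingHom.ker π = IsLocalRing.maximalIdeal T)
    (D : Subring k) [IsFractionRing D k] :
    ∃ hp : ((IsLocalRing.maximalIdeal T).comap (D.comap π).subtype).IsPrime,
      @IsLocalization (D.comap π) _
        (@Ideal.primeCompl _ _ ((IsLocalRing.maximalIdeal T).comap (D.comap π).subtype) hp)
        T _ (D.comap π).subtype.toAlgebra := by
  have hp : ((IsLocalRing.maximalIdeal T).comap (D.comap π).subtype).IsPrime :=
    Ideal.comap_isPrime _ _
  refine ⟨hp, (D.comap π).isLocalization_of_isUnit_of_exists_mul_mem _
    (fun s hs => IsLocalRing.notMem_maximalIdeal.mp hs) fun t => ?_⟩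
  obtain ⟨s, hsA, hs, hts⟩ := exists_mul_mem_comap_of_isFractionRing hπ D t
  refine ⟨⟨s, hsA⟩, ?_, hts⟩
  change s ∉ IsLocalRing.maximalIdeal T
  rwa [← hker, RingHom.mem_ker]
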